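/- Let X be a continuous lattice with Scott topology and r(v) = ⋁ v↓. Then r([x]) = x for every x ∈ X, i.e., r ∘ η_X = id_X; consequently (X, r) is an algebra for the open filter monad. -/

import Mathlib

open Set TopologicalSpace

variable {X Y : Type*}

/-- An open filter on a topological space: a lattice-theoretic filter of the
frame of open sets (so it contains `univ` and satisfies
`A ∩ B ∈ v ↔ A ∈ v ∧ B ∈ v` for open `A`, `B`). -/
def IsOpenFilter [TopologicalSpace X] (v : Set (Set X)) : Prop :=
  (∀ A ∈ v, IsOpen A) ∧ Set.univ ∈ v ∧
    ∀ A B : Set X, IsOpen A → IsOpen B → (A ∩ B ∈ v ↔ A ∈ v ∧ B ∈ v)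

/-- `Φ(X)`: the set of open filters of `X`, ordered by inclusion. -/
abbrev OF (X : Type*) [TopologicalSpace X] := {v : Set (Set X) // IsOpenFilter v}

/-- The basic open sets `φ(A) = {v ∈ Φ(X) | A ∈ v}` of the filter space. -/
def phi [TopologicalSpace X] (A : Set X) : Set (OF X) := {v : OF X | A ∈ v.1}

/-- The topology on `Φ(X)` generated by the sets `φ(A)`, `A` open. -/
instance OF.topologicalSpace (X : Type*) [TopologicalSpace X] : TopologicalSpace (OF X) :=
  generateFrom {S | ∃ A : Set X, IsOpen A ∧ S = phi A}

/-- An ideal of a poset: a nonempty directed lower set. -/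
def IsIdeal [Preorder X] (I : Set X) : Prop :=
  I.Nonempty ∧ DirectedOn (· ≤ ·) I ∧ IsLowerSet I

/-- The way-below relation on a complete lattice:
`x ≪ y` iff every ideal whose sup dominates `y` contains `x`. -/
def wayBelow [CompleteLattice X] (x y : X) : Prop :=
  ∀ I : Set X, IsIdeal I → y ≤ sSup I → x ∈ I

/-- A continuous lattice: every element is the sup of the elements way below it. -/
def IsContinuousLattice (X : Type*) [CompleteLattice X] : Prop :=
  ∀ x : X, x = sSup {y | wayBelow y x}

/-- The Scott topology on a complete lattice: open sets are the upper sets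
inaccessible by sups of ideals. -/
instance scottTop (X : Type*) [CompleteLattice X] : TopologicalSpace X where
  IsOpen U := IsUpperSet U ∧ ∀ I : Set X, IsIdeal I → sSup I ∈ U → (I ∩ U).Nonempty
  isOpen_univ := ⟨isUpperSet_univ, fun I hI _ => hI.1.imp fun _ ha => ⟨ha, trivial⟩⟩
  isOpen_inter U V hU hV := ⟨hU.1.inter hV.1, fun I hI hs => by
    obtain ⟨a, haI, haU⟩ := hU.2 I hI hs.1
    obtain ⟨b, hbI, hbV⟩ := hV.2 I hI hs.2
    obtain ⟨c, hcI, hac, hbc⟩ := hI.2.1 a haI b hbI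
    exact ⟨c, hcI, hU.1 hac haU, hV.1 hbc hbV⟩⟩
  isOpen_sUnion S hS := ⟨isUpperSet_sUnion fun s hs => (hS s hs).1, fun I hI hm => by
    obtain ⟨U, hU, hsU⟩ := hm
    obtain ⟨a, haI, haU⟩ := (hS U hU).2 I hI hsU
    exact ⟨a, haI, U, hU, haU⟩⟩

/-- `v↓ = ⋃_{A ∈ v} A↓` where `A↓ = {y | A ⊆ ↑y}`. -/
def downOf [CompleteLattice X] (v : Set (Set X)) : Set X :=
  {y | ∃ A ∈ v, A ⊆ Set.Ici y}

lemma isOpen_phi [TopologicalSpace X] {A : Set X} (hA : IsOpen A) : IsOpen (phi A) :=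
  TopologicalSpace.GenerateOpen.basic _ ⟨A, hA, rfl⟩

lemma phi_univ [TopologicalSpace X] : phi (Set.univ : Set X) = Set.univ :=
  Set.eq_univ_of_forall fun v => v.2.2.1

lemma phi_inter [TopologicalSpace X] {A B : Set X} (hA : IsOpen A) (hB : IsOpen B) :
    phi (A ∩ B) = phi A ∩ phi B :=
  Set.ext fun v => v.2.2.2 A B hA hB

/-- The open-neighborhood filter `[x]` of a point: the unit `η_X`. -/
def etaOF [TopologicalSpace X] (x : X) : OF X :=
  ⟨{A | IsOpen A ∧ x ∈ A}, fun _ hA => hA.1, ⟨isOpen_univ, mem_univ x⟩,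
    fun A B hA hB =>
      ⟨fun h => ⟨⟨hA, h.2.1⟩, ⟨hB, h.2.2⟩⟩, fun h => ⟨hA.inter hB, h.1.2, h.2.2⟩⟩⟩

/-- The open filter `[S] = {B open | S ⊆ B}` of a subset `S`. -/
def nbhdOF [TopologicalSpace X] (S : Set X) : OF X :=
  ⟨{B | IsOpen B ∧ S ⊆ B}, fun _ hA => hA.1, ⟨isOpen_univ, subset_univ S⟩,
    fun A B hA hB =>
      ⟨fun h => ⟨⟨hA, h.2.trans inter_subset_left⟩, ⟨hB, h.2.trans inter_subset_right⟩⟩,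
       fun h => ⟨hA.inter hB, subset_inter h.1.2 h.2.2⟩⟩⟩

/-- The action of `Φ` on a continuous map: `Φ(f)(u) = {B open | f⁻¹(B) ∈ u}`. -/
def mapOF [TopologicalSpace X] [TopologicalSpace Y] (f : X → Y) (hf : Continuous f) :
    OF X → OF Y := fun u =>
  ⟨{B | IsOpen B ∧ f ⁻¹' B ∈ u.1}, fun _ hA => hA.1,
    ⟨isOpen_univ, by simpa using u.2.2.1⟩,
    fun A B hA hB => by
      constructor
      · intro h
        have := (u.2.2.2 (f ⁻¹' A) (f ⁻¹' B) (hA.preimage hf) (hB.preimage hf)).1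
          (by simpa [Set.preimage_inter] using h.2)
        exact ⟨⟨hA, this.1⟩, ⟨hB, this.2⟩⟩
      · intro h
        refine ⟨hA.inter hB, ?_⟩
        rw [Set.preimage_inter]
        exact (u.2.2.2 _ _ (hA.preimage hf) (hB.preimage hf)).2 ⟨h.1.2, h.2.2⟩⟩

/-- The multiplication `μ_X(α) = {A open | φ(A) ∈ α}` of the open filter monad. -/
def muOF [TopologicalSpace X] : OF (OF X) → OF X := fun α =>
  ⟨{A | IsOpen A ∧ phi A ∈ α.1}, fun _ hA => hA.1,
    ⟨isOpen_univ, by rw [phi_univ]; exact α.2.2.1⟩,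
    fun A B hA hB => by
      constructor
      · intro h
        have := (α.2.2.2 (phi A) (phi B) (isOpen_phi hA) (isOpen_phi hB)).1
          (by rw [← phi_inter hA hB]; exact h.2)
        exact ⟨⟨hA, this.1⟩, ⟨hB, this.2⟩⟩
      · intro h
        exact ⟨hA.inter hB, by
          rw [phi_inter hA hB]
          exact (α.2.2.2 _ _ (isOpen_phi hA) (isOpen_phi hB)).2 ⟨h.1.2, h.2.2⟩⟩⟩

/-! In a continuous lattice, `y ≤ r v` holds iff the Scott-open set `↟w = {z | w ≪ z}` belongs to
`v` for every `w ≪ y` (one direction is interpolation `w ≪ w' ≪ r v`, which puts `w'` in the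
ideal `v↓`). Both algebra laws follow by comparing these conditions; for the multiplication law,
`r⁻¹(↟w) ⊆ φ(↟w)` and `φ(↟w') ⊆ r⁻¹(↟w)` whenever `w ≪ w'`, and interpolation closes the gap.
Continuity of `r` only needs that `v↓` is an ideal: `r⁻¹ U` contains `φ(A)` around `v` as soon as
`A ⊆ ↑y` for some `y ∈ v↓ ∩ U`. -/

lemma IsOpenFilter.mem_of_superset [TopologicalSpace X] {v : Set (Set X)} (hv : IsOpenFilter v)
    {A B : Set X} (hA : A ∈ v) (hB : IsOpen B) (hAB : A ⊆ B) : B ∈ v :=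
  ((hv.2.2 A B (hv.1 A hA) hB).1 (by rwa [inter_eq_left.2 hAB])).2

section CompleteLattice

variable [CompleteLattice X]

lemma isIdeal_Iic (z : X) : IsIdeal (Iic z) :=
  ⟨nonempty_Iic, fun _ ha _ hb => ⟨z, le_rfl, ha, hb⟩, isLowerSet_Iic z⟩

lemma wayBelow.le {w z : X} (hw : wayBelow w z) : w ≤ z :=
  hw (Iic z) (isIdeal_Iic z) (le_sSup le_rfl)

lemma wayBelow.trans_le {w z z' : X} (hw : wayBelow w z) (hz : z ≤ z') : wayBelow w z' :=
  fun I hI hle => hw I hI (hz.trans hle)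

lemma wayBelow.of_le_left {w w' z : X} (hw : wayBelow w z) (hw' : w' ≤ w) : wayBelow w' z :=
  fun I hI hle => hI.2.2 hw' (hw I hI hle)

lemma wayBelow_bot (z : X) : wayBelow ⊥ z := fun _ hI _ =>
  hI.2.2 bot_le hI.1.some_mem

lemma wayBelow.sup {w₁ w₂ z : X} (h₁ : wayBelow w₁ z) (h₂ : wayBelow w₂ z) :
    wayBelow (w₁ ⊔ w₂) z := fun I hI hle => by
  obtain ⟨c, hcI, hc₁, hc₂⟩ := hI.2.1 w₁ (h₁ I hI hle) w₂ (h₂ I hI hle)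
  exact hI.2.2 (sup_le hc₁ hc₂) hcI

lemma isIdeal_setOf_wayBelow (z : X) : IsIdeal {w | wayBelow w z} :=
  ⟨⟨⊥, wayBelow_bot z⟩, fun _ ha _ hb => ⟨_, ha.sup hb, le_sup_left, le_sup_right⟩,
    fun _ _ hle hz => hz.of_le_left hle⟩

lemma isIdeal_setOf_wayBelow_mem {I : Set X} (hI : IsIdeal I) :
    IsIdeal {w | ∃ z ∈ I, wayBelow w z} := by
  refine ⟨⟨⊥, hI.1.some, hI.1.some_mem, wayBelow_bot _⟩, ?_, ?_⟩
  · rintro a ⟨z₁, hz₁, ha⟩ b ⟨z₂, hz₂, hb⟩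
    obtain ⟨c, hcI, hc₁, hc₂⟩ := hI.2.1 z₁ hz₁ z₂ hz₂
    exact ⟨a ⊔ b, ⟨c, hcI, (ha.trans_le hc₁).sup (hb.trans_le hc₂)⟩, le_sup_left, le_sup_right⟩
  · rintro a b hle ⟨z, hz, ha⟩
    exact ⟨z, hz, ha.of_le_left hle⟩

def wayAbove (w : X) : Set X := {z | wayBelow w z}

lemma isIdeal_downOf (v : OF X) : IsIdeal (downOf v.1) := by
  refine ⟨⟨⊥, univ, v.2.2.1, fun _ _ => bot_le⟩, ?_, ?_⟩
  · rintro a ⟨A₁, hA₁, hs₁⟩ b ⟨A₂, hA₂, hs₂⟩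
    refine ⟨a ⊔ b, ⟨A₁ ∩ A₂, (v.2.2.2 A₁ A₂ (v.2.1 _ hA₁) (v.2.1 _ hA₂)).2 ⟨hA₁, hA₂⟩, ?_⟩,
      le_sup_left, le_sup_right⟩
    rw [← Ici_inter_Ici]
    exact inter_subset_inter hs₁ hs₂
  · rintro a b hle ⟨A, hA, hs⟩
    exact ⟨A, hA, hs.trans (Ici_subset_Ici.2 hle)⟩

lemma le_sSup_downOf_of_wayAbove_mem {v : OF X} {w : X} (hw : wayAbove w ∈ v.1) :
    w ≤ sSup (downOf v.1) :=
  le_sSup ⟨_, hw, fun _ hz => wayBelow.le hz⟩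

theorem continuous_sSup_downOf : Continuous (fun v : OF X => sSup (downOf v.1)) := by
  refine continuous_def.2 fun U hU => isOpen_iff_forall_mem_open.2 fun v hv => ?_
  obtain ⟨y, ⟨A, hAv, hAy⟩, hyU⟩ := hU.2 _ (isIdeal_downOf v) hv
  exact ⟨phi A, fun v' hv' => hU.1 (le_sSup ⟨A, hv', hAy⟩) hyU, isOpen_phi (v.2.1 A hAv), hAv⟩

namespace IsContinuousLattice

variable (h : IsContinuousLattice X)
include h

lemma le_of_forall_wayBelow_le {y m : X} (hm : ∀ w, wayBelow w y → w ≤ m) : y ≤ m :=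
  calc y = sSup {w | wayBelow w y} := h y
  _ ≤ m := sSup_le hm

lemma isOpen_wayAbove (w : X) : IsOpen (wayAbove w) := by
  refine ⟨fun _ _ hz hw => wayBelow.trans_le hw hz, fun I hI hmem => ?_⟩
  have hle : sSup I ≤ sSup {u | ∃ z ∈ I, wayBelow u z} :=
    sSup_le fun z hz => h.le_of_forall_wayBelow_le fun u hu => le_sSup ⟨z, hz, hu⟩
  obtain ⟨z, hzI, hwz⟩ := hmem _ (isIdeal_setOf_wayBelow_mem hI) hle
  exact ⟨z, hzI, hwz⟩

lemma exists_wayBelow_wayBelow {w y : X} (hw : wayBelow w y) :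
    ∃ w', wayBelow w w' ∧ wayBelow w' y := by
  obtain ⟨w', hw'y, hww'⟩ := (h.isOpen_wayAbove w).2 _ (isIdeal_setOf_wayBelow y)
    (by rwa [← h y])
  exact ⟨w', hww', hw'y⟩

lemma wayAbove_mem_of_wayBelow_sSup_downOf {v : OF X} {w : X}
    (hw : wayBelow w (sSup (downOf v.1))) : wayAbove w ∈ v.1 := by
  obtain ⟨w', hww', hw'⟩ := h.exists_wayBelow_wayBelow hw
  obtain ⟨A, hAv, hAw'⟩ := hw' _ (isIdeal_downOf v) le_rfl
  exact v.2.mem_of_superset hAv (h.isOpen_wayAbove w) fun z hz => hww'.trans_le (hAw' hz)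

lemma le_sSup_downOf_iff {v : OF X} {y : X} :
    y ≤ sSup (downOf v.1) ↔ ∀ w, wayBelow w y → wayAbove w ∈ v.1 :=
  ⟨fun hy _ hw => h.wayAbove_mem_of_wayBelow_sSup_downOf (hw.trans_le hy),
    fun hy => h.le_of_forall_wayBelow_le fun w hw => le_sSup_downOf_of_wayAbove_mem (hy w hw)⟩

lemma sSup_downOf_etaOF (x : X) : sSup (downOf (etaOF x).1) = x :=
  eq_of_forall_le_iff fun y => by
    rw [h.le_sSup_downOf_iff]
    exact ⟨fun hy => h.le_of_forall_wayBelow_le fun w hw => wayBelow.le (hy w hw).2,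
      fun hyx w hw => ⟨h.isOpen_wayAbove w, hw.trans_le hyx⟩⟩

lemma sSup_downOf_mapOF_eq_sSup_downOf_muOF
    (hc : Continuous (fun v : OF X => sSup (downOf v.1))) (α : OF (OF X)) :
    sSup (downOf (mapOF (fun v : OF X => sSup (downOf v.1)) hc α).1) =
      sSup (downOf (muOF α).1) :=
  eq_of_forall_le_iff fun y => by
    rw [h.le_sSup_downOf_iff, h.le_sSup_downOf_iff]
    refine ⟨fun hy w hw => ⟨h.isOpen_wayAbove w, ?_⟩, fun hy w hw => ⟨h.isOpen_wayAbove w, ?_⟩⟩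
    · exact α.2.mem_of_superset (hy w hw).2 (isOpen_phi (h.isOpen_wayAbove w))
        fun v hv => h.wayAbove_mem_of_wayBelow_sSup_downOf hv
    · obtain ⟨w', hww', hw'y⟩ := h.exists_wayBelow_wayBelow hw
      exact α.2.mem_of_superset (hy w' hw'y).2 ((h.isOpen_wayAbove w).preimage hc)
        fun v hv => hww'.trans_le (le_sSup_downOf_of_wayAbove_mem hv)

end IsContinuousLattice

end CompleteLattice

/-- for a continuous lattice with `r(v) = ⋁ v↓`, `r([x]) = x` for all
`x` (the unit law `r ∘ η_X = id`); consequently, `r` being continuous and also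
satisfying `r ∘ Φ(r) = r ∘ μ_X`, the pair `(X, r)` is a `Φ`-algebra. -/
theorem r_algebra [CompleteLattice X] (h : IsContinuousLattice X) :
    ∃ hc : Continuous (fun v : OF X => sSup (downOf v.1)),
      (∀ x : X, sSup (downOf (etaOF x).1) = x) ∧
      ∀ α : OF (OF X),
        sSup (downOf (mapOF (fun v : OF X => sSup (downOf v.1)) hc α).1) =
          sSup (downOf (muOF α).1) :=
  ⟨continuous_sSup_downOf, h.sSup_downOf_etaOF,
    h.sSup_downOf_mapOF_eq_sSup_downOf_muOF continuous_sSup_downOf⟩
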